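/- In B_4, if β', β'', β''' are strongly quasipositive braids (possibly trivial), then the braid σ_{1,3}^{−1} σ_{2,4} β' σ_{2,3} β'' σ_{1,2} β''' is quasipositive. -/

import Mathlib

/-- Relations for the braid group `Bₙ`: the generator `k : Fin (n-1)` represents `σ_{k+1}`,
and we impose `σ_i σ_j = σ_j σ_i` for `|i - j| > 1` and `σ_i σ_{i+1} σ_i = σ_{i+1} σ_i σ_{i+1}`. -/
def braidRels (n : ℕ) : Set (FreeGroup (Fin (n - 1))) :=
  {r | ∃ i j : Fin (n - 1), (i : ℕ) + 1 < (j : ℕ) ∧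
      r = FreeGroup.of i * FreeGroup.of j * (FreeGroup.of i)⁻¹ * (FreeGroup.of j)⁻¹} ∪
  {r | ∃ i j : Fin (n - 1), (j : ℕ) = (i : ℕ) + 1 ∧
      r = FreeGroup.of i * FreeGroup.of j * FreeGroup.of i *
          (FreeGroup.of j * FreeGroup.of i * FreeGroup.of j)⁻¹}

/-- The braid group on `n` strands, presented with generators `σ_1, …, σ_{n-1}`. -/
abbrev BraidGroup (n : ℕ) : Type := PresentedGroup (braidRels n)

/-- The standard generator `σ_i` of `Bₙ`, for `1 ≤ i ≤ n - 1` (junk value `1` otherwise). -/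
def sigma (n i : ℕ) : BraidGroup n :=
  if h : 1 ≤ i ∧ i ≤ n - 1 then PresentedGroup.of ⟨i - 1, by omega⟩ else 1

/-- The word `σ_{j-1} σ_{j-2} ⋯ σ_{i+1}`. -/
def bandConj (n i j : ℕ) : BraidGroup n :=
  ((List.range (j - 1 - i)).map fun t => sigma n (j - 1 - t)).prod

/-- The band generator `σ_{i,j} = (σ_{j-1} σ_{j-2} ⋯ σ_{i+1}) σ_i (σ_{j-1} σ_{j-2} ⋯ σ_{i+1})⁻¹`.
In particular `σ_{i,i+1} = σ_i`. -/
def band (n i j : ℕ) : BraidGroup n :=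
  bandConj n i j * sigma n i * (bandConj n i j)⁻¹

/-- The set of band generators `σ_{i,j}`, `1 ≤ i < j ≤ n`, of `Bₙ`. -/
def bandGens (n : ℕ) : Set (BraidGroup n) :=
  {x | ∃ i j : ℕ, 1 ≤ i ∧ i < j ∧ j ≤ n ∧ x = band n i j}

/-- A braid is strongly quasipositive if it is a product of band generators, i.e. lies in the
submonoid generated by the `σ_{i,j}`, `1 ≤ i < j ≤ n`. -/
def StronglyQuasipositive (n : ℕ) (x : BraidGroup n) : Prop :=
  x ∈ Submonoid.closure (bandGens n)

/-- A braid is quasipositive if it lies in the submonoid generated by all conjugates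
`α σ_k α⁻¹` of the standard generators. -/
def Quasipositive (n : ℕ) (x : BraidGroup n) : Prop :=
  x ∈ Submonoid.closure
    {x : BraidGroup n | ∃ (α : BraidGroup n) (k : ℕ), 1 ≤ k ∧ k ≤ n - 1 ∧ x = α * sigma n k * α⁻¹}

/-
The band relation `σ_{2,3} σ_{1,2} = σ_{1,2} σ_{1,3}` (a form of `σ₂σ₁σ₂ = σ₁σ₂σ₁`) lets the
factor `σ_{2,3} β'' σ_{1,2}` be rewritten as `(σ_{2,3} β'' σ_{2,3}⁻¹) σ_{1,2} σ_{1,3}`. The trailing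
`σ_{1,3}` then cancels the leading `σ_{1,3}⁻¹` after conjugating by `σ_{1,3}`, and what remains is a
product of conjugates of band generators and of strongly quasipositive braids.
-/

theorem Submonoid.conj_mem_closure {G : Type*} [Group G] {S : Set G}
    (hS : ∀ g, ∀ s ∈ S, g * s * g⁻¹ ∈ S) (g : G) {x : G} (hx : x ∈ Submonoid.closure S) :
    g * x * g⁻¹ ∈ Submonoid.closure S := by
  have hmap := Submonoid.mem_map_of_mem (MulAut.conj g).toMonoidHom hx
  rw [MonoidHom.map_mclosure] at hmap
  refine Submonoid.closure_mono ?_ hmap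
  rintro _ ⟨s, hs, rfl⟩
  exact hS g s hs

theorem Submonoid.inv_mul_mem_of_mul_eq_mul {G : Type*} [Group G] {M : Submonoid G}
    (hM : ∀ g, ∀ m ∈ M, g * m * g⁻¹ ∈ M) {a b x y β₁ β₂ β₃ : G} (hba : b * a = a * x)
    (hy : y ∈ M) (ha : a ∈ M) (h₁ : β₁ ∈ M) (h₂ : β₂ ∈ M) (h₃ : β₃ ∈ M) :
    x⁻¹ * y * β₁ * b * β₂ * a * β₃ ∈ M := by
  have hax : b⁻¹ * a * x = a := by rw [mul_assoc, ← hba, inv_mul_cancel_left]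
  have key : x⁻¹ * y * β₁ * b * β₂ * a * β₃ =
      x⁻¹ * (y * β₁ * (b * β₂ * b⁻¹) * a * (x * β₃ * x⁻¹)) * x⁻¹⁻¹ := by
    conv_lhs => rw [← hax]
    group
  rw [key]
  exact hM _ _ (M.mul_mem (M.mul_mem (M.mul_mem (M.mul_mem hy h₁) (hM b _ h₂)) ha) (hM x _ h₃))

section Braid

variable {n : ℕ}

theorem sigma_mul_sigma_succ_mul_sigma {i : ℕ} (hi : 1 ≤ i) (hin : i + 2 ≤ n) :
    sigma n i * sigma n (i + 1) * sigma n i = sigma n (i + 1) * sigma n i * sigma n (i + 1) := by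
  have hrel : FreeGroup.of (⟨i - 1, by omega⟩ : Fin (n - 1)) * FreeGroup.of ⟨i, by omega⟩ *
      FreeGroup.of ⟨i - 1, by omega⟩ * (FreeGroup.of ⟨i, by omega⟩ *
        FreeGroup.of ⟨i - 1, by omega⟩ * FreeGroup.of ⟨i, by omega⟩)⁻¹ ∈ braidRels n :=
    Or.inr ⟨_, _, by simp only; omega, rfl⟩
  have h := PresentedGroup.mk_eq_mk_of_mul_inv_mem hrel
  simp only [map_mul] at h
  simp only [sigma, dif_pos (And.intro hi (by omega : i ≤ n - 1)),
    dif_pos (And.intro (by omega : 1 ≤ i + 1) (by omega : i + 1 ≤ n - 1)), Nat.add_sub_cancel]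
  exact h

theorem band_self_add_one (i : ℕ) : band n i (i + 1) = sigma n i := by
  simp [band, bandConj]

theorem band_self_add_two (i : ℕ) :
    band n i (i + 2) = sigma n (i + 1) * sigma n i * (sigma n (i + 1))⁻¹ := by
  simp [band, bandConj]

theorem sigma_succ_mul_sigma {i : ℕ} (hi : 1 ≤ i) (hin : i + 2 ≤ n) :
    sigma n (i + 1) * sigma n i = sigma n i * band n i (i + 2) := by
  rw [band_self_add_two]
  rw [← mul_assoc, ← mul_assoc, sigma_mul_sigma_succ_mul_sigma hi hin]
  group

theorem Quasipositive.conj {x : BraidGroup n} (g : BraidGroup n) (hx : Quasipositive n x) :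
    Quasipositive n (g * x * g⁻¹) := by
  refine Submonoid.conj_mem_closure ?_ g hx
  rintro g _ ⟨α, k, hk, hkn, rfl⟩
  exact ⟨g * α, k, hk, hkn, by group⟩

theorem band_quasipositive {i j : ℕ} (hi : 1 ≤ i) (hij : i < j) (hj : j ≤ n) :
    Quasipositive n (band n i j) :=
  Submonoid.subset_closure ⟨bandConj n i j, i, hi, by omega, rfl⟩

theorem StronglyQuasipositive.quasipositive {x : BraidGroup n}
    (hx : StronglyQuasipositive n x) : Quasipositive n x := by
  refine Submonoid.closure_le.mpr ?_ hx
  rintro _ ⟨i, j, hi, hij, hj, rfl⟩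
  exact band_quasipositive hi hij hj

end Braid

/-- In `B₄`, for strongly quasipositive `β', β'', β'''`, the braid
`σ_{1,3}⁻¹ σ_{2,4} β' σ_{2,3} β'' σ_{1,2} β'''` is quasipositive. -/
theorem claim_case2_s23 (β' β'' β''' : BraidGroup 4)
    (hβ' : StronglyQuasipositive 4 β') (hβ'' : StronglyQuasipositive 4 β'')
    (hβ''' : StronglyQuasipositive 4 β''') :
    Quasipositive 4
      ((band 4 1 3)⁻¹ * band 4 2 4 * β' * band 4 2 3 * β'' * band 4 1 2 * β''') := by
  have hband : band 4 2 3 * band 4 1 2 = band 4 1 2 * band 4 1 3 := by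
    simpa only [band_self_add_one] using sigma_succ_mul_sigma (n := 4) le_rfl (by norm_num)
  exact Submonoid.inv_mul_mem_of_mul_eq_mul (fun g _ hm ↦ Quasipositive.conj g hm) hband
    (band_quasipositive (by norm_num) (by norm_num) le_rfl)
    (band_quasipositive le_rfl (by norm_num) (by norm_num))
    hβ'.quasipositive hβ''.quasipositive hβ'''.quasipositive
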